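/- Let σ > 0, x_c ∈ ℝ, r ∈ [0,1), and k ∈ ℕ with k ≥ 1. For Δx > 0 define pixel centers x_i = (i + r)·Δx for i ∈ ℤ and g_i(x_c) = ∫_{x_i−Δx/2}^{x_i+Δx/2} Φ(x − x_c) dx, where Φ(x) = (1/(√(2π)σ)) e^{−x²/(2σ²)}. Then lim_{Δx→0⁺} (1/Δx^{k−1})·Σ_{i∈ℤ} (x_i − x_c)·g_i(x_c)^k = 0; that is, in the high-resolution limit every sum of a power of g_i modulated by the odd factor (x_i − x_c) vanishes at the appropriate normalization. -/

import Mathlib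

/-!
Index the pixels by `J(x)`, the pixel containing `x`. Then
`Δx^{-(k-1)} Σ_i (x_i - x_c) g_i^k = ∫ (x_{J(x)} - x_c) (g_{J(x)}/Δx)^{k-1} Φ(x - x_c) dx`.
As `Δx → 0`, `x_{J(x)} → x` and `g_{J(x)}/Δx → Φ(x - x_c)` (the average of a continuous
function over a shrinking interval), while the integrand stays below
`‖Φ‖_∞^{k-1} (|x - x_c| + 1) Φ(x - x_c)`. Dominated convergence gives the limit
`∫ (x - x_c) Φ(x - x_c)^k dx`, which vanishes because the integrand is odd about `x_c`.
-/

open Real Filter Topology MeasureTheory Set Function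

namespace PixelSampling

noncomputable section

def pixelCenter (r Δx : ℝ) (i : ℤ) : ℝ := (i + r) * Δx

-- Pixels are half-open so that they tile `ℝ`; `pixelIndex r Δx x` is the pixel containing `x`.
def pixel (r Δx : ℝ) (i : ℤ) : Set ℝ :=
  Ioc (pixelCenter r Δx i - Δx / 2) (pixelCenter r Δx i + Δx / 2)

def pixelIndex (r Δx x : ℝ) : ℤ := ⌈x / Δx - r - 1 / 2⌉

variable {r Δx : ℝ}

lemma pixelIndex_eq_iff (hΔ : 0 < Δx) {x : ℝ} {i : ℤ} :
    pixelIndex r Δx x = i ↔ x ∈ pixel r Δx i := by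
  obtain ⟨t, rfl⟩ : ∃ t, x = t * Δx := ⟨x / Δx, (div_mul_cancel₀ x hΔ.ne').symm⟩
  rw [pixelIndex, Int.ceil_eq_iff, pixel, pixelCenter, mem_Ioc, mul_div_cancel_right₀ t hΔ.ne',
    show (i + r) * Δx - Δx / 2 = (i + r - 1 / 2) * Δx by ring,
    show (i + r) * Δx + Δx / 2 = (i + r + 1 / 2) * Δx by ring,
    mul_lt_mul_iff_of_pos_right hΔ, mul_le_mul_iff_of_pos_right hΔ]
  constructor <;> rintro ⟨h₁, h₂⟩ <;> constructor <;> linarith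

lemma mem_pixel_pixelIndex (hΔ : 0 < Δx) (x : ℝ) : x ∈ pixel r Δx (pixelIndex r Δx x) :=
  (pixelIndex_eq_iff hΔ).1 rfl

lemma abs_pixelCenter_pixelIndex_sub_le (hΔ : 0 < Δx) (x : ℝ) :
    |pixelCenter r Δx (pixelIndex r Δx x) - x| ≤ Δx / 2 := by
  obtain ⟨h₁, h₂⟩ := mem_pixel_pixelIndex (r := r) hΔ x
  rw [abs_le]
  constructor <;> linarith

lemma tendsto_half_nhdsGT_zero : Tendsto (fun Δx : ℝ => Δx / 2) (𝓝[>] 0) (𝓝 0) := by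
  simpa using (tendsto_nhdsWithin_of_tendsto_nhds (tendsto_id (x := 𝓝 (0 : ℝ)))).div_const 2

lemma tendsto_pixelCenter_pixelIndex (r x : ℝ) :
    Tendsto (fun Δx => pixelCenter r Δx (pixelIndex r Δx x)) (𝓝[>] 0) (𝓝 x) := by
  rw [tendsto_iff_norm_sub_tendsto_zero]
  refine squeeze_zero' (Eventually.of_forall fun _ => norm_nonneg _) ?_ tendsto_half_nhdsGT_zero
  filter_upwards [self_mem_nhdsWithin] with Δx hΔ
  exact abs_pixelCenter_pixelIndex_sub_le hΔ x

lemma measurable_pixelIndex (r Δx : ℝ) : Measurable (pixelIndex r Δx) :=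
  Int.measurable_ceil.comp (by fun_prop)

lemma measurableSet_pixel {i : ℤ} : MeasurableSet (pixel r Δx i) := measurableSet_Ioc

lemma tsum_mul_setIntegral_pixel (hΔ : 0 < Δx) (a : ℤ → ℝ) {φ : ℝ → ℝ}
    (h : Integrable fun x => a (pixelIndex r Δx x) * φ x) :
    ∑' i, a i * ∫ y in pixel r Δx i, φ y = ∫ x, a (pixelIndex r Δx x) * φ x := by
  have hU : ⋃ i, pixel r Δx i = univ :=
    eq_univ_of_forall fun x => mem_iUnion.2 ⟨_, mem_pixel_pixelIndex hΔ x⟩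
  have hdisj : Pairwise (Disjoint on pixel r Δx) := fun i j hij =>
    disjoint_left.2 fun x hi hj =>
      hij (((pixelIndex_eq_iff hΔ).2 hi).symm.trans ((pixelIndex_eq_iff hΔ).2 hj))
  rw [← setIntegral_univ, ← hU, integral_iUnion (fun _ => measurableSet_pixel) hdisj
    (hU ▸ h.integrableOn)]
  refine tsum_congr fun i => ?_
  rw [← integral_const_mul]
  refine setIntegral_congr_fun measurableSet_pixel fun x hx => ?_
  rw [(pixelIndex_eq_iff hΔ).2 hx]

lemma tendsto_intervalIntegral_pixelIndex_div {φ : ℝ → ℝ} (hφ : Continuous φ) (r x : ℝ) :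
    Tendsto (fun Δx => (∫ y in (pixelCenter r Δx (pixelIndex r Δx x) - Δx / 2)..
      (pixelCenter r Δx (pixelIndex r Δx x) + Δx / 2), φ y) / Δx) (𝓝[>] 0) (𝓝 (φ x)) := by
  have hc := tendsto_pixelCenter_pixelIndex r x
  have ho := intervalIntegral.integral_sub_linear_isLittleO_of_tendsto_ae
    (hφ.stronglyMeasurableAtFilter _ _) ((hφ.tendsto x).mono_left inf_le_left)
    (by simpa using hc.sub tendsto_half_nhdsGT_zero)
    (by simpa using hc.add tendsto_half_nhdsGT_zero)
  have hlim := ho.tendsto_div_nhds_zero.add_const (φ x)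
  rw [zero_add] at hlim
  refine hlim.congr' ?_
  filter_upwards [self_mem_nhdsWithin] with Δx (hΔ : 0 < Δx)
  simp only [Pi.sub_apply, smul_eq_mul, add_sub_sub_cancel, add_halves]
  rw [sub_div, mul_div_cancel_left₀ _ hΔ.ne', sub_add_cancel]

variable {φ : ℝ → ℝ} {M : ℝ}

lemma abs_intervalIntegral_pixel_le (hM : ∀ x, |φ x| ≤ M) (hΔ : 0 < Δx) (i : ℤ) :
    |∫ y in (pixelCenter r Δx i - Δx / 2)..(pixelCenter r Δx i + Δx / 2), φ y| ≤ M * Δx := by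
  have h := intervalIntegral.norm_integral_le_of_norm_le_const
    (a := pixelCenter r Δx i - Δx / 2) (b := pixelCenter r Δx i + Δx / 2)
    fun y _ => (Real.norm_eq_abs (φ y)).trans_le (hM y)
  rwa [Real.norm_eq_abs, add_sub_sub_cancel, add_halves, abs_of_pos hΔ] at h

theorem tendsto_pixel_moment_sum (hφ : Continuous φ) (hM : ∀ x, |φ x| ≤ M) (hφ₀ : Integrable φ)
    {c : ℝ} (hφ₁ : Integrable fun x => (x - c) * φ x) (g : ℝ → ℤ → ℝ)
    (hg : ∀ Δx i, g Δx i =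
      ∫ y in (pixelCenter r Δx i - Δx / 2)..(pixelCenter r Δx i + Δx / 2), φ y) (m : ℕ) :
    Tendsto (fun Δx => 1 / Δx ^ m * ∑' i, (pixelCenter r Δx i - c) * g Δx i ^ (m + 1))
      (𝓝[>] 0) (𝓝 (∫ x, (x - c) * φ x ^ (m + 1))) := by
  set a : ℝ → ℤ → ℝ := fun Δx i => (pixelCenter r Δx i - c) * (g Δx i / Δx) ^ m
  set F : ℝ → ℝ → ℝ := fun Δx x => a Δx (pixelIndex r Δx x) * φ x
  set bound : ℝ → ℝ := fun x => M ^ m * (|(x - c) * φ x| + |φ x|)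
  have hmeas (Δx : ℝ) : AEStronglyMeasurable (F Δx) :=
    ((Measurable.of_discrete (f := a Δx)).comp (measurable_pixelIndex r Δx)).mul
      hφ.measurable |>.aestronglyMeasurable
  have hbound_int : Integrable bound := (hφ₁.abs.add hφ₀.abs).const_mul _
  have hF_le {Δx : ℝ} (hΔ : Δx ∈ Ioo 0 2) (x : ℝ) : ‖F Δx x‖ ≤ bound x := by
    have hM₀ : 0 ≤ M := (abs_nonneg _).trans (hM 0)
    have hcenter : |pixelCenter r Δx (pixelIndex r Δx x) - c| ≤ |x - c| + 1 := by
      have := abs_pixelCenter_pixelIndex_sub_le (r := r) hΔ.1 x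
      calc _ ≤ |pixelCenter r Δx (pixelIndex r Δx x) - x| + |x - c| := abs_sub_le _ _ _
        _ ≤ |x - c| + 1 := by linarith [hΔ.2]
    have hratio : |g Δx (pixelIndex r Δx x) / Δx| ≤ M := by
      rw [abs_div, abs_of_pos hΔ.1, div_le_iff₀ hΔ.1, hg]
      exact abs_intervalIntegral_pixel_le hM hΔ.1 _
    calc ‖F Δx x‖
        = |pixelCenter r Δx (pixelIndex r Δx x) - c| * |g Δx (pixelIndex r Δx x) / Δx| ^ m
            * |φ x| := by simp only [F, a, Real.norm_eq_abs, abs_mul, abs_pow]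
      _ ≤ (|x - c| + 1) * M ^ m * |φ x| := by gcongr
      _ = bound x := by simp only [bound, abs_mul]; ring
  have hsum {Δx : ℝ} (hΔ : Δx ∈ Ioo 0 2) :
      1 / Δx ^ m * ∑' i, (pixelCenter r Δx i - c) * g Δx i ^ (m + 1) = ∫ x, F Δx x := by
    have hF_int : Integrable (F Δx) :=
      hbound_int.mono' (hmeas Δx) (ae_of_all _ (hF_le hΔ))
    rw [← tsum_mul_setIntegral_pixel hΔ.1 (a Δx) hF_int, ← tsum_mul_left]
    refine tsum_congr fun i => ?_
    rw [pixel, ← intervalIntegral.integral_of_le (by linarith [hΔ.1]), ← hg]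
    simp only [a, div_pow]
    field_simp
    ring
  have hlim (x : ℝ) : Tendsto (fun Δx => F Δx x) (𝓝[>] 0) (𝓝 ((x - c) * φ x ^ (m + 1))) := by
    rw [pow_succ, ← mul_assoc]
    refine (((tendsto_pixelCenter_pixelIndex r x).sub_const c).mul
      ((tendsto_intervalIntegral_pixelIndex_div hφ r x).pow m)).mul_const _ |>.congr fun Δx => ?_
    simp only [F, a, hg]
  refine (tendsto_integral_filter_of_dominated_convergence bound (Eventually.of_forall hmeas)
    ?_ hbound_int (ae_of_all _ hlim)).congr' ?_
  · filter_upwards [Ioo_mem_nhdsGT two_pos] with Δx hΔ using ae_of_all _ (hF_le hΔ)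
  · filter_upwards [Ioo_mem_nhdsGT two_pos] with Δx hΔ using (hsum hΔ).symm

lemma integral_sub_mul_comp_sub_eq_zero {ψ : ℝ → ℝ} (hψ : ∀ u, ψ (-u) = ψ u) (c : ℝ) :
    ∫ x, (x - c) * ψ (x - c) = 0 := by
  rw [integral_sub_right_eq_self (fun u => u * ψ u) c]
  have h := integral_neg_eq_self (fun u => u * ψ u) volume
  simp only [hψ, neg_mul, integral_neg] at h
  linarith

def gaussianDensity (σ c x : ℝ) : ℝ := 1 / (√(2 * π) * σ) * exp (-(x - c) ^ 2 / (2 * σ ^ 2))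

variable {σ : ℝ}

lemma continuous_gaussianDensity (σ c : ℝ) : Continuous (gaussianDensity σ c) := by
  unfold gaussianDensity
  fun_prop

lemma abs_gaussianDensity_le (hσ : 0 < σ) (c x : ℝ) :
    |gaussianDensity σ c x| ≤ 1 / (√(2 * π) * σ) := by
  have hC : 0 < 1 / (√(2 * π) * σ) := by positivity
  rw [gaussianDensity, abs_of_pos (by positivity)]
  refine mul_le_of_le_one_right hC.le (exp_le_one_iff.2 ?_)
  exact div_nonpos_of_nonpos_of_nonneg (neg_nonpos.2 (sq_nonneg _)) (by positivity)

lemma gaussianDensity_eq (σ c x : ℝ) :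
    gaussianDensity σ c x = 1 / (√(2 * π) * σ) * exp (-(1 / (2 * σ ^ 2)) * (x - c) ^ 2) := by
  rw [gaussianDensity]
  ring_nf

lemma integrable_gaussianDensity (hσ : 0 < σ) (c : ℝ) : Integrable (gaussianDensity σ c) := by
  simp_rw [funext (gaussianDensity_eq σ c)]
  exact ((integrable_exp_neg_mul_sq (by positivity)).comp_sub_right c).const_mul _

lemma integrable_sub_mul_gaussianDensity (hσ : 0 < σ) (c : ℝ) :
    Integrable fun x => (x - c) * gaussianDensity σ c x := by
  simp_rw [gaussianDensity_eq, mul_left_comm (_ - c)]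
  exact ((integrable_mul_exp_neg_mul_sq (by positivity)).comp_sub_right c).const_mul _

lemma integral_sub_mul_gaussianDensity_pow (σ c : ℝ) (k : ℕ) :
    ∫ x, (x - c) * gaussianDensity σ c x ^ k = 0 := by
  simpa [gaussianDensity] using
    integral_sub_mul_comp_sub_eq_zero (ψ := fun u => gaussianDensity σ 0 u ^ k)
      (by simp [gaussianDensity]) c

end

end PixelSampling

open PixelSampling

theorem stmt_10_general
    (σ xc r : ℝ) (hσ : 0 < σ)
    (k : ℕ) (hk : 1 ≤ k)
    (g : ℝ → ℤ → ℝ)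
    (hg : ∀ Δx : ℝ, ∀ i : ℤ, g Δx i =
      ∫ x in (((i : ℝ) + r) * Δx - Δx / 2)..(((i : ℝ) + r) * Δx + Δx / 2),
        (1 / (Real.sqrt (2 * π) * σ)) * Real.exp (-(x - xc) ^ 2 / (2 * σ ^ 2))) :
    Tendsto (fun Δx : ℝ =>
        (1 / Δx ^ (k - 1)) * ∑' i : ℤ, (((i : ℝ) + r) * Δx - xc) * g Δx i ^ k)
      (𝓝[>] 0) (𝓝 0) := by
  obtain ⟨m, rfl⟩ := Nat.exists_eq_add_of_le' hk
  simpa [integral_sub_mul_gaussianDensity_pow, pixelCenter] using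
    tendsto_pixel_moment_sum (continuous_gaussianDensity σ xc) (abs_gaussianDensity_le hσ xc)
      (integrable_gaussianDensity hσ xc) (integrable_sub_mul_gaussianDensity hσ xc) g hg m

/-- **High-resolution limit: odd moments vanish.**  For pixels of size `Δx`
centered at `x_i = (i+r)Δx` with Gaussian flux fractions `g_i(x_c)`, and any
`k ≥ 1`, `(1/Δx^{k−1}) Σ_{i∈ℤ} (x_i − x_c) g_i(x_c)^k → 0` as `Δx → 0⁺`. -/
theorem stmt_10
    (σ xc r : ℝ) (hσ : 0 < σ) (hr : r ∈ Set.Ico (0 : ℝ) 1)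
    (k : ℕ) (hk : 1 ≤ k)
    (g : ℝ → ℤ → ℝ)
    (hg : ∀ Δx : ℝ, ∀ i : ℤ, g Δx i =
      ∫ x in (((i : ℝ) + r) * Δx - Δx / 2)..(((i : ℝ) + r) * Δx + Δx / 2),
        (1 / (Real.sqrt (2 * π) * σ)) * Real.exp (-(x - xc) ^ 2 / (2 * σ ^ 2))) :
    Tendsto (fun Δx : ℝ =>
        (1 / Δx ^ (k - 1)) * ∑' i : ℤ, (((i : ℝ) + r) * Δx - xc) * g Δx i ^ k)
      (𝓝[>] 0) (𝓝 0) :=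
  stmt_10_general σ xc r hσ k hk g hg
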